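/- Under Gaussian noise, for a fixed non-constant x, the GLR and the normalized correlation induce the same ordering on templates: for any non-constant a₁, a₂, C(x, a₁) < C(x, a₂) implies G(x, a₁) < G(x, a₂); consequently argmax over a finite dictionary D of G(x, ·) coincides with argmax of C(x, ·). -/
import Mathlib


open Finset Real

noncomputable def emean {N : ℕ} (x : Fin N → ℝ) : ℝ := (∑ k, x k) / N

noncomputable def ncorr {N : ℕ} (x a : Fin N → ℝ) : ℝ :=
  |∑ k, (x k - emean x) * (a k - emean a)| /
    Real.sqrt ((∑ k, (x k - emean x) ^ 2) * (∑ k, (a k - emean a) ^ 2))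

/-- The Gaussian GLR in closed form. -/
noncomputable def gaussGLR {N : ℕ} (σ : ℝ) (x a : Fin N → ℝ) : ℝ :=
  Real.exp (-((1 - ncorr x a ^ 2) * (∑ k, (x k - emean x) ^ 2) / (2 * σ ^ 2)))

lemma ncorr_nonneg {N : ℕ} (x a : Fin N → ℝ) : 0 ≤ ncorr x a :=
  div_nonneg (abs_nonneg _) (Real.sqrt_nonneg _)

lemma glr_strictMono {N : ℕ} (σ : ℝ) (hσ : 0 < σ)
    (x : Fin N → ℝ) (hx : 0 < ∑ k, (x k - emean x) ^ 2)
    (a₁ a₂ : Fin N → ℝ) (h : ncorr x a₁ < ncorr x a₂) :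
    gaussGLR σ x a₁ < gaussGLR σ x a₂ := by
  have h1 := ncorr_nonneg x a₁
  have hsq : ncorr x a₁ ^ 2 < ncorr x a₂ ^ 2 := by
    apply pow_lt_pow_left₀ h h1 (by norm_num)
  unfold gaussGLR
  apply Real.exp_lt_exp.mpr
  have hd : (0:ℝ) < 2 * σ ^ 2 := by positivity
  rw [neg_lt_neg_iff, div_lt_div_iff_of_pos_right hd]
  apply mul_lt_mul_of_pos_right _ hx
  linarith

theorem glr_correlation_same_ordering {N : ℕ} (σ : ℝ) (hσ : 0 < σ)
    (x : Fin N → ℝ) (hx : 0 < ∑ k, (x k - emean x) ^ 2) :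
    (∀ a₁ a₂ : Fin N → ℝ, (∃ i j, a₁ i ≠ a₁ j) → (∃ i j, a₂ i ≠ a₂ j) →
      ncorr x a₁ < ncorr x a₂ → gaussGLR σ x a₁ < gaussGLR σ x a₂) ∧
    ∀ (D : Finset (Fin N → ℝ)), (∀ a ∈ D, ∃ i j, a i ≠ a j) →
      ∀ a ∈ D, ((∀ b ∈ D, gaussGLR σ x b ≤ gaussGLR σ x a) ↔
        (∀ b ∈ D, ncorr x b ≤ ncorr x a)) := by
  have key : ∀ a b : Fin N → ℝ, gaussGLR σ x b ≤ gaussGLR σ x a ↔ ncorr x b ≤ ncorr x a := by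
    intro a b
    constructor
    · intro h
      by_contra hc
      exact absurd (glr_strictMono σ hσ x hx a b (lt_of_not_ge hc)).le (not_le.mpr (lt_of_le_of_ne h (by
        intro he
        exact absurd h (not_le.mpr (glr_strictMono σ hσ x hx a b (lt_of_not_ge hc))))))
    · intro h
      rcases eq_or_lt_of_le h with he | hlt
      · unfold gaussGLR; rw [he]
      · exact (glr_strictMono σ hσ x hx b a hlt).le
  refine ⟨fun a₁ a₂ _ _ h => glr_strictMono σ hσ x hx a₁ a₂ h, ?_⟩
  intro D _ a _
  exact ⟨fun h b hb => (key a b).mp (h b hb), fun h b hb => (key a b).mpr (h b hb)⟩
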